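/- Let G be a finite group. If C is a clique of the reduced graph ℛ_{𝒮(G)} of the order supergraph of G, then C is a proper order chain of G; that is, the elements of C can be listed as a_1, a_2, …, a_k so that o(a_1) ∣ o(a_2) ∣ ⋯ ∣ o(a_k) and o(a_i) ≠ o(a_j) for all i ≠ j. -/

import Mathlib

/-- The closed neighborhood of a vertex `x` in a simple graph. -/
def closedNbhd {V : Type*} (Γ : SimpleGraph V) (x : V) : Set V :=
  insert x (Γ.neighborSet x)

/-- `z` strongly resolves `x` and `y` if some shortest path from `z` to `x`
contains `y`, or some shortest path from `z` to `y` contains `x`. -/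
def StronglyResolves {V : Type*} (Γ : SimpleGraph V) (z x y : V) : Prop :=
  (∃ w : Γ.Walk z x, w.IsPath ∧ w.length = Γ.dist z x ∧ y ∈ w.support) ∨
  (∃ w : Γ.Walk z y, w.IsPath ∧ w.length = Γ.dist z y ∧ x ∈ w.support)

/-- `S` is a strong resolving set if every pair of distinct vertices is
strongly resolved by some vertex of `S`. -/
def IsStrongResolvingSet {V : Type*} (Γ : SimpleGraph V) (S : Set V) : Prop :=
  ∀ x y : V, x ≠ y → ∃ z ∈ S, StronglyResolves Γ z x y

/-- The strong metric dimension: the minimum size of a strong resolving set. -/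
noncomputable def sdim {V : Type*} [Fintype V] (Γ : SimpleGraph V) : ℕ :=
  sInf {k | ∃ S : Finset V, S.card = k ∧ IsStrongResolvingSet Γ ↑S}

/-- The equivalence relation `x ≈ y` iff `N[x] = N[y]`. -/
def nbhdSetoid {V : Type*} (Γ : SimpleGraph V) : Setoid V :=
  ⟨fun x y => closedNbhd Γ x = closedNbhd Γ y,
   ⟨fun _ => rfl, Eq.symm, Eq.trans⟩⟩

/-- The reduced graph `ℛ_Γ`: vertices are the `≈`-classes, two distinct classes
being adjacent iff some (equivalently, any) pair of their members is adjacent in `Γ`. -/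
def reducedGraph {V : Type*} (Γ : SimpleGraph V) :
    SimpleGraph (Quotient (nbhdSetoid Γ)) where
  Adj a b := a ≠ b ∧ ∃ x y : V,
    Quotient.mk (nbhdSetoid Γ) x = a ∧ Quotient.mk (nbhdSetoid Γ) y = b ∧ Γ.Adj x y
  symm := by constructor; rintro a b ⟨h, x, y, hx, hy, hadj⟩; exact ⟨h.symm, y, x, hy, hx, hadj.symm⟩
  loopless := by constructor; rintro a ⟨h, -⟩; exact h rfl

/-- The order supergraph `𝒮(G)`: distinct `x, y` are adjacent iff
`o(x) ∣ o(y)` or `o(y) ∣ o(x)`. -/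
def orderSupergraph (G : Type*) [Group G] : SimpleGraph G where
  Adj x y := x ≠ y ∧ (orderOf x ∣ orderOf y ∨ orderOf y ∣ orderOf x)
  symm := by constructor; rintro x y ⟨h, h2⟩; exact ⟨h.symm, h2.symm⟩
  loopless := by constructor; rintro x ⟨h, -⟩; exact h rfl

/-- The enhanced power graph `𝒫_E(G)`: distinct `x, y` are adjacent iff
`⟨x, y⟩` is cyclic. -/
def enhancedPowerGraph (G : Type*) [Group G] : SimpleGraph G where
  Adj x y := x ≠ y ∧ IsCyclic (Subgroup.closure ({x, y} : Set G))
  symm := by constructor; rintro x y ⟨h, h2⟩; rw [Set.pair_comm] at h2; exact ⟨h.symm, h2⟩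
  loopless := by constructor; rintro x ⟨h, -⟩; exact h rfl

/-- The reduced power graph `𝒫_R(G)`: distinct `x, y` are adjacent iff
`⟨x⟩ ⊂ ⟨y⟩` or `⟨y⟩ ⊂ ⟨x⟩`. -/
def reducedPowerGraph (G : Type*) [Group G] : SimpleGraph G where
  Adj x y := Subgroup.zpowers x < Subgroup.zpowers y ∨ Subgroup.zpowers y < Subgroup.zpowers x
  symm := by constructor; rintro x y h; exact h.symm
  loopless := by constructor; rintro x h; rcases h with h | h <;> exact lt_irrefl _ h

/-- `Ω n`: the number of prime factors of `n` counted with multiplicity. -/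
def bigOmega (n : ℕ) : ℕ := n.primeFactorsList.length

/-- A maximal cyclic subgroup: a cyclic subgroup not properly contained in any
cyclic subgroup. -/
def IsMaxCyclic {G : Type*} [Group G] (M : Subgroup G) : Prop :=
  IsCyclic M ∧ ∀ N : Subgroup G, IsCyclic N → M ≤ N → M = N

/-- `ℳ_g`: the set of maximal cyclic subgroups containing `g`. -/
def maxCyclicOn {G : Type*} [Group G] (g : G) : Set (Subgroup G) :=
  {M | IsMaxCyclic M ∧ g ∈ M}

/-!
Adjacency in `𝒮(G)` depends only on element orders, so elements of equal order have equal closed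
neighbourhoods; hence the elements of `C` have pairwise distinct orders. These orders are also
pairwise comparable under divisibility, so listing `C` by increasing order gives a divisibility
chain: once `o(a) ≤ o(b)`, the alternative `o(b) ∣ o(a)` forces `o(a) = o(b)`, orders being positive.
-/

theorem mem_closedNbhd_orderSupergraph {G : Type*} [Group G] {x y : G} :
    y ∈ closedNbhd (orderSupergraph G) x ↔ orderOf x ∣ orderOf y ∨ orderOf y ∣ orderOf x := by
  rcases eq_or_ne y x with rfl | hyx
  · simp [closedNbhd]
  · simp [closedNbhd, orderSupergraph, hyx, hyx.symm]

theorem closedNbhd_orderSupergraph_eq_of_orderOf_eq {G : Type*} [Group G] {x y : G}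
    (h : orderOf x = orderOf y) :
    closedNbhd (orderSupergraph G) x = closedNbhd (orderSupergraph G) y := by
  ext z
  rw [mem_closedNbhd_orderSupergraph, mem_closedNbhd_orderSupergraph, h]

theorem Nat.dvd_of_le_of_dvd_or_dvd {m n : ℕ} (hm : 0 < m) (hle : m ≤ n) (h : m ∣ n ∨ n ∣ m) :
    m ∣ n :=
  h.elim id fun hnm => (le_antisymm hle (Nat.le_of_dvd hm hnm)) ▸ dvd_rfl

theorem Finset.exists_list_pairwise_dvd {α : Type*} (s : Finset α) (f : α → ℕ)
    (hpos : ∀ a ∈ s, 0 < f a) (hcomp : ∀ a ∈ s, ∀ b ∈ s, a ≠ b → f a ∣ f b ∨ f b ∣ f a) :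
    ∃ l : List α, l.Nodup ∧ (∀ a, a ∈ l ↔ a ∈ s) ∧ l.Pairwise (fun a b => f a ∣ f b) := by
  set l := s.toList.mergeSort (fun a b => f a ≤ f b)
  have hperm : l.Perm s.toList := List.mergeSort_perm _ _
  have hmem : ∀ a, a ∈ l ↔ a ∈ s := fun a => hperm.mem_iff.trans Finset.mem_toList
  have hnodup : l.Nodup := hperm.nodup_iff.mpr s.nodup_toList
  have hsorted : l.Pairwise (fun a b => f a ≤ f b) := by
    simpa using List.pairwise_mergeSort (le := fun a b => decide (f a ≤ f b))
      (fun _ _ _ hab hbc => by simp only [decide_eq_true_eq] at *; omega)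
      (fun a b => by simp only [Bool.or_eq_true, decide_eq_true_eq]; omega) s.toList
  refine ⟨l, hnodup, hmem, (hsorted.and (List.nodup_iff_pairwise_ne.mp hnodup)).imp_of_mem ?_⟩
  rintro a b ha hb ⟨hle, hab⟩
  exact Nat.dvd_of_le_of_dvd_or_dvd (hpos a ((hmem a).mp ha)) hle
    (hcomp a ((hmem a).mp ha) b ((hmem b).mp hb) hab)

/-- Lemma 3.7: a clique of the reduced graph `ℛ_{𝒮(G)}` (a set of pairwise adjacent
vertices with pairwise distinct closed neighborhoods) is a proper order chain of `G`. -/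
theorem reduced_clique_isProperOrderChain (G : Type*) [Group G] [Fintype G]
    (C : Finset G)
    (hadj : ∀ x ∈ C, ∀ y ∈ C, x ≠ y → (orderSupergraph G).Adj x y)
    (hcls : ∀ x ∈ C, ∀ y ∈ C, x ≠ y →
      closedNbhd (orderSupergraph G) x ≠ closedNbhd (orderSupergraph G) y) :
    ∃ l : List G, l.Nodup ∧ (∀ x : G, x ∈ l ↔ x ∈ C) ∧
      (l.map orderOf).Chain' (· ∣ ·) ∧ (l.map orderOf).Nodup := by
  have horder : Set.InjOn orderOf (C : Set G) := fun x hx y hy hxy => by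
    by_contra hne
    exact hcls x hx y hy hne (closedNbhd_orderSupergraph_eq_of_orderOf_eq hxy)
  obtain ⟨l, hnodup, hmem, hdvd⟩ := C.exists_list_pairwise_dvd orderOf
    (fun x _ => orderOf_pos x) (fun x hx y hy hxy => (hadj x hx y hy hxy).2)
  refine ⟨l, hnodup, hmem, (List.pairwise_map.mpr hdvd).isChain, hnodup.map_on ?_⟩
  exact fun x hx y hy => horder ((hmem x).mp hx) ((hmem y).mp hy)
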